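/- For a set A with at least two elements that injects into 𝒫(η) for an ordinal η via e, the set f(A) = {a ∈ A : min(⋃_{a∈A} e(a) \ ⋂_{a∈A} e(a)) ∉ e(a)} is a nonempty proper subset of A. -/

import Mathlib

universe u v

namespace Set

variable {ι α : Type*}

theorem iUnion_diff_iInter_nonempty_of_ne {e : ι → Set α} {i j : ι} (h : e i ≠ e j) :
    ((⋃ a, e a) \ ⋂ a, e a).Nonempty := by
  by_contra hempty
  have hsub : (⋃ a, e a) ⊆ ⋂ a, e a := sdiff_eq_empty.1 (not_nonempty_iff_eq_empty.1 hempty)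
  exact h <| ((subset_iUnion e i).trans (hsub.trans (iInter_subset e j))).antisymm
    ((subset_iUnion e j).trans (hsub.trans (iInter_subset e i)))

theorem nonempty_setOf_notMem_iff_notMem_iInter (e : ι → Set α) (m : α) :
    {a | m ∉ e a}.Nonempty ↔ m ∉ ⋂ a, e a := by
  simp only [mem_iInter, not_forall, Set.Nonempty, mem_ofPred_eq]

theorem setOf_notMem_ne_univ_iff_mem_iUnion (e : ι → Set α) (m : α) :
    {a | m ∉ e a} ≠ univ ↔ m ∈ ⋃ a, e a := by
  simp only [ne_eq, eq_univ_iff_forall, mem_ofPred_eq, not_forall, not_not, mem_iUnion]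

theorem Nonempty.exists_isLeast [LinearOrder α] [WellFoundedLT α] {s : Set α} (hs : s.Nonempty) :
    ∃ m, IsLeast s m :=
  (WellFoundedLT.exists_minimal inferInstance s hs).imp fun _ ↦ minimal_iff_isLeast.1

end Set

theorem kw_split_nonempty_proper (A : Type u) (η : Ordinal.{v})
    (e : A → Set η.ToType) (he : Function.Injective e)
    (a₀ b₀ : A) (hab : a₀ ≠ b₀) :
    ∃ m : η.ToType, IsLeast ((⋃ a, e a) \ (⋂ a, e a)) m ∧
      {a : A | m ∉ e a}.Nonempty ∧ {a : A | m ∉ e a} ≠ Set.univ := by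
  obtain ⟨m, hm⟩ := (Set.iUnion_diff_iInter_nonempty_of_ne (he.ne hab)).exists_isLeast
  exact ⟨m, hm, (Set.nonempty_setOf_notMem_iff_notMem_iInter e m).2 hm.1.2,
    (Set.setOf_notMem_ne_univ_iff_mem_iUnion e m).2 hm.1.1⟩
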